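/- Let m = n, let A be an n-by-n real unitary (orthogonal) matrix with columns a_1,...,a_n (so AᵀA = I), let W be a symmetric m-by-m real matrix with zero diagonal, b ∈ ℝ^m, σ_e > 0, σ_{x,i} > 0 for i = 1,...,m, and y ∈ ℝ^n. For S ∈ {-1,1}^m let s = {i : S_i = 1} with cardinality k, let A_s be the n-by-k submatrix of A with the columns indexed by s, let Σ_s be the k-by-k diagonal matrix with diagonal entries σ_{x,i}² for i ∈ s, and let Q_s = A_sᵀA_s + σ_e²Σ_s⁻¹. Let v ∈ ℝ^m have entries v_i = ln(σ_{x,i}²/σ_e²), and define q ∈ ℝ^m by q_i = b_i + (1/4)[ (σ_{x,i}²/(σ_e²(σ_e² + σ_{x,i}²)))·(yᵀa_i)² − ln(1 + σ_{x,i}²/σ_e²) ]. Then there exists a constant C ∈ ℝ, independent of S, such that for every S ∈ {-1,1}^m: (1/(2σ_e²))·yᵀA_sQ_s⁻¹A_sᵀy − (1/2)·ln(det Q_s) + (1/2)·SᵀWS + (b − v/4)ᵀS = C + qᵀS + (1/2)·SᵀWS. Consequently, the posterior distribution of the support under the Boltzmann-machine generative model is itself a Boltzmann machine with the same interaction matrix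 W and the modified bias vector q. -/

import Mathlib

/-!
For a unitary dictionary the columns of `A_s` are orthonormal, so
`Q_s = 1 + σe² Σ_s⁻¹` is diagonal with entries `dᵢ = 1 + σe² / σxᵢ²`. Both the quadratic form
and `ln det Q_s` then split into sums over `i ∈ s` of per-coordinate terms `fᵢ`. Since
`Sᵢ ∈ {±1}`, the indicator of `i ∈ s` is `(1 + Sᵢ) / 2`, so `∑_{i ∈ s} fᵢ` is the constant
`(∑ fᵢ) / 2` plus `(f / 2)ᵀ S`, and `q = b - v / 4 + f / 2` coordinatewise.
-/

open Matrix Finset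

namespace Matrix

variable {l m n R : Type*}

theorem submatrix_id_transpose_mul_self_eq_one [Fintype m] [DecidableEq n] [DecidableEq l]
    [NonAssocSemiring R] {A : Matrix m n R} (hA : Aᵀ * A = 1) {e : l → n}
    (he : Function.Injective e) : (A.submatrix id e)ᵀ * A.submatrix id e = 1 := by
  rw [← submatrix_one e he, ← hA]
  rfl

theorem inv_diagonal_of_ne_zero [Fintype n] [DecidableEq n] [Field R] {v : n → R}
    (hv : ∀ i, v i ≠ 0) : (diagonal v)⁻¹ = diagonal v⁻¹ :=
  inv_eq_right_inv <| by
    rw [diagonal_mul_diagonal, ← diagonal_one]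
    exact congrArg diagonal (funext fun i => mul_inv_cancel₀ (hv i))

theorem one_add_smul_inv_diagonal [Fintype n] [DecidableEq n] [Field R] (c : R) {v : n → R}
    (hv : ∀ i, v i ≠ 0) : 1 + c • (diagonal v)⁻¹ = diagonal fun i => 1 + c / v i := by
  rw [inv_diagonal_of_ne_zero hv, ← diagonal_smul, ← diagonal_one, diagonal_add]
  simp only [Pi.smul_apply, Pi.inv_apply, smul_eq_mul, div_eq_mul_inv]

theorem dotProduct_mul_diagonal_mul_transpose_mulVec [Fintype m] [Fintype n] [DecidableEq n]
    [CommSemiring R] (M : Matrix m n R) (w : n → R) (y : m → R) :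
    y ⬝ᵥ (M * diagonal w * Mᵀ) *ᵥ y = ∑ j, w j * (y ᵥ* M) j ^ 2 := by
  rw [← mulVec_mulVec, ← mulVec_mulVec, dotProduct_mulVec, mulVec_transpose]
  simp only [dotProduct, mulVec_diagonal]
  exact sum_congr rfl fun j _ => by ring

end Matrix

theorem sum_filter_eq_one_eq_half_add_dotProduct {ι R : Type*} [Fintype ι] [Field R]
    [DecidableEq R] [NeZero (2 : R)] {S : ι → R} (hS : ∀ i, S i = 1 ∨ S i = -1) (f : ι → R) :
    ∑ i ∈ univ.filter (S · = 1), f i = (∑ i, f i) / 2 + ((1 / 2 : R) • f) ⬝ᵥ S := by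
  rw [sum_filter, sum_div, dotProduct, ← sum_add_distrib]
  refine sum_congr rfl fun i _ => ?_
  by_cases h : S i = 1
  · rw [if_pos h, h, Pi.smul_apply, smul_eq_mul, mul_one, one_div_mul_eq_div, add_halves]
  · rw [if_neg h, (hS i).resolve_left h, Pi.smul_apply, smul_eq_mul]
    ring

theorem Real.log_one_add_div {x y : ℝ} (hx : 0 < x) (hy : 0 < y) :
    Real.log (1 + x / y) = Real.log (1 + y / x) + Real.log (x / y) := by
  rw [← Real.log_mul (by positivity) (by positivity)]
  congr 1
  field_simp
  ring

theorem boltzmann_conjugate_prior_unitary_general (n : ℕ)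
    (A : Matrix (Fin n) (Fin n) ℝ) (hA : Aᵀ * A = 1)
    (W : Matrix (Fin n) (Fin n) ℝ)
    (b : Fin n → ℝ) (σe : ℝ) (hσe : 0 < σe)
    (σx : Fin n → ℝ) (hσx : ∀ i, 0 < σx i)
    (y : Fin n → ℝ)
    (v : Fin n → ℝ) (hv : ∀ i, v i = Real.log ((σx i) ^ 2 / σe ^ 2))
    (q : Fin n → ℝ)
    (hq : ∀ i, q i = b i + (1 / 4) *
      ((σx i) ^ 2 / (σe ^ 2 * (σe ^ 2 + (σx i) ^ 2)) * (y ⬝ᵥ (fun r => A r i)) ^ 2 -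
        Real.log (1 + (σx i) ^ 2 / σe ^ 2))) :
    ∃ C : ℝ, ∀ S : Fin n → ℝ, (∀ i, S i = 1 ∨ S i = -1) →
      let s : Finset (Fin n) := Finset.univ.filter (fun i => S i = 1)
      let As : Matrix (Fin n) {i // i ∈ s} ℝ := A.submatrix id (fun i => i.1)
      let Qs : Matrix {i // i ∈ s} {i // i ∈ s} ℝ :=
        Asᵀ * As + σe ^ 2 • (Matrix.diagonal (fun i : {i // i ∈ s} => (σx i.1) ^ 2))⁻¹
      (1 / (2 * σe ^ 2)) * (y ⬝ᵥ ((As * Qs⁻¹ * Asᵀ) *ᵥ y)) -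
          (1 / 2) * Real.log Qs.det +
          (1 / 2) * (S ⬝ᵥ (W *ᵥ S)) + (b - (1 / 4 : ℝ) • v) ⬝ᵥ S
        = C + q ⬝ᵥ S + (1 / 2) * (S ⬝ᵥ (W *ᵥ S)) := by
  set d : Fin n → ℝ := fun i => 1 + σe ^ 2 / σx i ^ 2
  have hd_pos (i) : 0 < d i := by have := hσx i; positivity
  set f : Fin n → ℝ := fun i =>
    1 / (2 * σe ^ 2) * ((d i)⁻¹ * (y ᵥ* A) i ^ 2) - 1 / 2 * Real.log (d i)
  have hq_eq : q = b - (1 / 4 : ℝ) • v + (1 / 2 : ℝ) • f := by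
    funext i
    have := hσx i
    rw [Pi.add_apply, Pi.sub_apply, Pi.smul_apply, Pi.smul_apply, hq, hv,
      Real.log_one_add_div (by positivity) (by positivity)]
    simp only [f, d, smul_eq_mul, vecMul]
    field_simp
    ring
  refine ⟨(∑ i, f i) / 2, fun S hS => ?_⟩
  intro s As Qs
  have hQs : Qs = diagonal fun j : s => d j := by
    rw [show Qs = Asᵀ * As + _ from rfl,
      show Asᵀ * As = 1 from submatrix_id_transpose_mul_self_eq_one hA Subtype.val_injective,
      one_add_smul_inv_diagonal (v := fun j : s => σx j ^ 2) _ fun j => (pow_pos (hσx j) 2).ne']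
  have hmarg : 1 / (2 * σe ^ 2) * (y ⬝ᵥ (As * Qs⁻¹ * Asᵀ) *ᵥ y) - 1 / 2 * Real.log Qs.det
      = ∑ i ∈ s, f i := by
    rw [hQs, inv_diagonal_of_ne_zero (v := fun j : s => d j) fun j => (hd_pos j).ne',
      dotProduct_mul_diagonal_mul_transpose_mulVec, det_diagonal,
      Real.log_prod (f := fun j : s => d j) fun j _ => (hd_pos j).ne', mul_sum, mul_sum,
      ← sum_sub_distrib, ← sum_coe_sort s f]
    rfl
  rw [hmarg, sum_filter_eq_one_eq_half_add_dotProduct hS, hq_eq, add_dotProduct]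
  ring

/-- Theorem 1 of the paper: for a unitary dictionary A, the
Boltzmann machine is a conjugate prior for MAP support estimation: there is a
constant C (independent of S) such that for every S ∈ {−1,1}^m (with support
s = {i : S_i = 1}, A_s the corresponding column submatrix, Σ_s the diagonal
matrix of variances on s, and Q_s = A_sᵀA_s + σ_e²Σ_s⁻¹),
(1/(2σ_e²))·yᵀA_sQ_s⁻¹A_sᵀy − (1/2)·ln(det Q_s) + (1/2)·SᵀWS + (b − v/4)ᵀS
  = C + qᵀS + (1/2)·SᵀWS,
i.e. the posterior of the support is a Boltzmann machine with the same
interaction matrix W and the modified bias vector q. -/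
theorem boltzmann_conjugate_prior_unitary (n : ℕ) (hn : 1 ≤ n)
    (A : Matrix (Fin n) (Fin n) ℝ) (hA : Aᵀ * A = 1)
    (W : Matrix (Fin n) (Fin n) ℝ) (hW : W.IsSymm) (hWd : ∀ i, W i i = 0)
    (b : Fin n → ℝ) (σe : ℝ) (hσe : 0 < σe)
    (σx : Fin n → ℝ) (hσx : ∀ i, 0 < σx i)
    (y : Fin n → ℝ)
    (v : Fin n → ℝ) (hv : ∀ i, v i = Real.log ((σx i) ^ 2 / σe ^ 2))
    (q : Fin n → ℝ)
    (hq : ∀ i, q i = b i + (1 / 4) *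
      ((σx i) ^ 2 / (σe ^ 2 * (σe ^ 2 + (σx i) ^ 2)) * (y ⬝ᵥ (fun r => A r i)) ^ 2 -
        Real.log (1 + (σx i) ^ 2 / σe ^ 2))) :
    ∃ C : ℝ, ∀ S : Fin n → ℝ, (∀ i, S i = 1 ∨ S i = -1) →
      let s : Finset (Fin n) := Finset.univ.filter (fun i => S i = 1)
      let As : Matrix (Fin n) {i // i ∈ s} ℝ := A.submatrix id (fun i => i.1)
      let Qs : Matrix {i // i ∈ s} {i // i ∈ s} ℝ :=
        Asᵀ * As + σe ^ 2 • (Matrix.diagonal (fun i : {i // i ∈ s} => (σx i.1) ^ 2))⁻¹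
      (1 / (2 * σe ^ 2)) * (y ⬝ᵥ ((As * Qs⁻¹ * Asᵀ) *ᵥ y)) -
          (1 / 2) * Real.log Qs.det +
          (1 / 2) * (S ⬝ᵥ (W *ᵥ S)) + (b - (1 / 4 : ℝ) • v) ⬝ᵥ S
        = C + q ⬝ᵥ S + (1 / 2) * (S ⬝ᵥ (W *ᵥ S)) :=
  boltzmann_conjugate_prior_unitary_general n A hA W b σe hσe σx hσx y v hv q hq
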